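/- Let {(y^t, z^t)} be generated by the PPG algorithm for min_z h(z) + P(Mz − b) with parameters β > 0, γ = 1, τ ≥ β‖M*M‖ and T = τI − βMM*. Then for every t ≥ 0, y^{t+1} ∈ ∂P( M z^{t+1} − b − T(y^{t+1} − y^t) ). -/

import Mathlib

open RealInnerProductSpace Filter Topology

/-- `v` is a subgradient of the extended-real-valued function `f` at `x`. -/
def IsSubgradAt {E : Type*} [NormedAddCommGroup E] [InnerProductSpace ℝ E]
    (f : E → EReal) (v x : E) : Prop :=
  ∀ u, f x + ((⟪v, u - x⟫ : ℝ) : EReal) ≤ f u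

/-- The convex conjugate of an extended-real-valued function. -/
noncomputable def conj {E : Type*} [NormedAddCommGroup E] [InnerProductSpace ℝ E]
    (f : E → EReal) (w : E) : EReal :=
  ⨆ u, ((⟪w, u⟫ : ℝ) : EReal) - f u

/-- The convex conjugate of a real-valued function. -/
noncomputable def conjR {E : Type*} [NormedAddCommGroup E] [InnerProductSpace ℝ E]
    (f : E → ℝ) (w : E) : EReal :=
  ⨆ u, ((⟪w, u⟫ - f u : ℝ) : EReal)

/-!
Write `W = T yᵗ - b + M zᵗ - β M ∇h(zᵗ)`, so that the `y`-update is the proximal step of `τ⁻¹ P*`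
at `w = τ⁻¹ W`. It is computed through `P` itself: `P` has an affine minorant (Hahn–Banach applied
to its closed convex epigraph), so `P + ‖· - W‖² / (2τ)` is coercive and lower semicontinuous and
attains its minimum at some `x`, where the optimality condition reads `v := τ⁻¹ (W - x) ∈ ∂P(x)`.
The Fenchel–Young equality `P*(v) = ⟪v, x⟫ - P x` makes `v` the minimiser of `P* + (τ/2)‖· - w‖²`,
with quadratic growth, so `yᵗ⁺¹ = v`. With `γ = 1` the `z`-update turns `x = W - τ yᵗ⁺¹` into the
claimed point `M zᵗ⁺¹ - b - T(yᵗ⁺¹ - yᵗ)`.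
-/

def EConvex {E : Type*} [AddCommGroup E] [Module ℝ E] (P : E → EReal) : Prop :=
  ∀ (u₁ u₂ : E) (a b : ℝ), 0 ≤ a → 0 ≤ b → a + b = 1 →
    P (a • u₁ + b • u₂) ≤ (a : EReal) * P u₁ + (b : EReal) * P u₂

theorem EReal.exists_eq_coe {x : EReal} (hbot : x ≠ ⊥) (htop : x ≠ ⊤) : ∃ r : ℝ, x = r :=
  ⟨x.toReal, (EReal.coe_toReal htop hbot).symm⟩

theorem nonpos_of_forall_le_mul {A B : ℝ} (h : ∀ s : ℝ, 0 < s → s ≤ 1 → A ≤ s * B) : A ≤ 0 := by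
  have hlim : Tendsto (fun s : ℝ => s * B) (𝓝[>] 0) (𝓝 0) := by
    simpa using ((continuous_mul_const B).tendsto 0).mono_left nhdsWithin_le_nhds
  refine ge_of_tendsto hlim ?_
  filter_upwards [Ioc_mem_nhdsGT zero_lt_one] with s hs using h s hs.1 hs.2

theorem le_of_sq_div_sub_mul_le {r m D τ : ℝ} (hτ : 0 < τ) (hm : 0 ≤ m)
    (h : r ^ 2 / (2 * τ) - m * r ≤ D) : r ≤ 2 * τ * m + 2 * τ * |D| + 1 := by
  by_contra! hr
  have h' : r ^ 2 - 2 * τ * m * r ≤ 2 * τ * D := by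
    have := mul_le_mul_of_nonneg_left h (by positivity : 0 ≤ 2 * τ)
    field_simp at this
    linarith
  have hpos : 0 < (r - 1) * (r - 2 * τ * m) :=
    mul_pos (by nlinarith [abs_nonneg D]) (by nlinarith [abs_nonneg D])
  nlinarith [mul_le_mul_of_nonneg_left (le_abs_self D) (by positivity : 0 ≤ 2 * τ)]

theorem LowerSemicontinuous.exists_forall_le_of_isCompact {α β : Type*} [TopologicalSpace α]
    [LinearOrder β] {f : α → β} (hf : LowerSemicontinuous f) (x₀ : α)
    (hK : IsCompact {x | f x ≤ f x₀}) : ∃ x, ∀ y, f x ≤ f y := by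
  obtain ⟨x, -, hx⟩ := (hf.lowerSemicontinuousOn {x | f x ≤ f x₀}).exists_isMinOn
    ⟨x₀, le_refl (f x₀)⟩ hK
  refine ⟨x, fun y => ?_⟩
  by_cases hy : f y ≤ f x₀
  · exact hx hy
  · exact (hx (le_refl (f x₀))).trans (not_le.1 hy).le

theorem LowerSemicontinuous.isClosed_real_epigraph {α : Type*} [TopologicalSpace α]
    {P : α → EReal} (hP : LowerSemicontinuous P) : IsClosed {p : α × ℝ | P p.1 ≤ p.2} :=
  hP.isClosed_epigraph.preimage (continuous_id.prodMap continuous_coe_real_ereal)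

namespace EConvex

section Module
variable {E : Type*} [AddCommGroup E] [Module ℝ E] {P : E → EReal}

theorem le_of_le_of_le (hP : EConvex P) {u₁ u₂ : E} {r₁ r₂ a b : ℝ} (h₁ : P u₁ ≤ r₁)
    (h₂ : P u₂ ≤ r₂) (ha : 0 ≤ a) (hb : 0 ≤ b) (hab : a + b = 1) :
    P (a • u₁ + b • u₂) ≤ ((a * r₁ + b * r₂ : ℝ) : EReal) := by
  calc P (a • u₁ + b • u₂) ≤ (a : EReal) * P u₁ + (b : EReal) * P u₂ := hP u₁ u₂ a b ha hb hab
    _ ≤ (a : EReal) * r₁ + (b : EReal) * r₂ := by gcongr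
    _ = _ := by norm_cast

theorem convex_epigraph (hP : EConvex P) : Convex ℝ {p : E × ℝ | P p.1 ≤ p.2} := by
  rintro ⟨u₁, r₁⟩ h₁ ⟨u₂, r₂⟩ h₂ a b ha hb hab
  exact hP.le_of_le_of_le h₁ h₂ ha hb hab

end Module

section Normed
variable {E : Type*} [NormedAddCommGroup E] [NormedSpace ℝ E] {P : E → EReal}

theorem exists_affine_le (hP : EConvex P) (hlsc : LowerSemicontinuous P) (hbot : ∀ u, P u ≠ ⊥)
    (hne : ∃ u, P u ≠ ⊤) : ∃ (ψ : StrongDual ℝ E) (c : ℝ), ∀ u, ((ψ u + c : ℝ) : EReal) ≤ P u := by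
  obtain ⟨u₀, hu₀⟩ := hne
  obtain ⟨r₀, hr₀⟩ := EReal.exists_eq_coe (hbot u₀) hu₀
  obtain ⟨f, d, hfd, hd⟩ := geometric_hahn_banach_point_closed hP.convex_epigraph
    hlsc.isClosed_real_epigraph (x := (u₀, r₀ - 1)) (show ¬P u₀ ≤ ((r₀ - 1 : ℝ) : EReal) by
      rw [hr₀, EReal.coe_le_coe_iff]; linarith)
  have hsplit : ∀ u r, f (u, r) = f (u, 0) + r * f (0, 1) := fun u r => by
    rw [← smul_eq_mul, ← map_smul, ← map_add]; simp
  -- the separating hyperplane is not vertical, since it separates two points on a vertical line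
  have hα : 0 < f (0, 1) := by
    have := hd (u₀, r₀) hr₀.le
    rw [hsplit] at this hfd
    linarith
  refine ⟨-(f (0, 1))⁻¹ • f.comp (.inl ℝ E ℝ), (f (0, 1))⁻¹ * d, fun u => ?_⟩
  by_cases hu : P u = ⊤
  · simp [hu]
  obtain ⟨p, hp⟩ := EReal.exists_eq_coe (hbot u) hu
  have hdu := hd (u, p) hp.le
  rw [hsplit] at hdu
  rw [hp, EReal.coe_le_coe_iff]
  simp only [smul_apply, ContinuousLinearMap.comp_apply, ContinuousLinearMap.inl_apply,
    smul_eq_mul]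
  rw [show -(f (0, 1))⁻¹ * f (u, 0) + (f (0, 1))⁻¹ * d = (f (0, 1))⁻¹ * (d - f (u, 0)) by ring,
    inv_mul_le_iff₀ hα]
  linarith

theorem exists_forall_add_sq_le [ProperSpace E] (hP : EConvex P) (hlsc : LowerSemicontinuous P)
    (hbot : ∀ u, P u ≠ ⊥) (hne : ∃ u, P u ≠ ⊤) (a : E) {τ : ℝ} (hτ : 0 < τ) :
    ∃ x, ∀ y, P x + ((‖x - a‖ ^ 2 / (2 * τ) : ℝ) : EReal)
      ≤ P y + ((‖y - a‖ ^ 2 / (2 * τ) : ℝ) : EReal) := by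
  obtain ⟨ψ, c, hψ⟩ := hP.exists_affine_le hlsc hbot hne
  obtain ⟨u₀, hu₀⟩ := hne
  obtain ⟨r₀, hr₀⟩ := EReal.exists_eq_coe (hbot u₀) hu₀
  set g : E → EReal := fun v => P v + ((‖v - a‖ ^ 2 / (2 * τ) : ℝ) : EReal)
  have hg : LowerSemicontinuous g :=
    hlsc.add' (continuous_coe_real_ereal.comp (by fun_prop)).lowerSemicontinuous
      fun v => EReal.continuousAt_add (.inr (EReal.coe_ne_bot _)) (.inr (EReal.coe_ne_top _))
  set G := r₀ + ‖u₀ - a‖ ^ 2 / (2 * τ)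
  have hgu₀ : g u₀ = (G : EReal) := by simp only [g, hr₀, G, EReal.coe_add]
  have hsub : {v | g v ≤ g u₀} ⊆ Metric.closedBall a
      (2 * τ * ‖ψ‖ + 2 * τ * |G - c - ψ a| + 1) := by
    intro v hv
    have hgv : ψ v + c + ‖v - a‖ ^ 2 / (2 * τ) ≤ G := by
      exact_mod_cast (add_le_add (hψ v) le_rfl).trans (hv.trans_eq hgu₀)
    have hψv : ψ a - ‖ψ‖ * ‖v - a‖ ≤ ψ v := by
      have := neg_le_of_abs_le (ψ.le_opNorm (v - a))
      rw [map_sub] at this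
      linarith
    rw [Metric.mem_closedBall, dist_eq_norm]
    exact le_of_sq_div_sub_mul_le hτ (norm_nonneg ψ) (by linarith)
  exact hg.exists_forall_le_of_isCompact u₀ (Metric.isCompact_of_isClosed_isBounded
    (hg.isClosed_preimage _) (Metric.isBounded_closedBall.subset hsub))

end Normed

section InnerProduct
variable {E : Type*} [NormedAddCommGroup E] [InnerProductSpace ℝ E] {P : E → EReal}

theorem isSubgradAt_of_forall_add_sq_le (hP : EConvex P) (hbot : ∀ u, P u ≠ ⊥) {a x : E}
    {τ : ℝ} (hτ : 0 < τ) (hx : P x ≠ ⊤)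
    (hmin : ∀ y, P x + ((‖x - a‖ ^ 2 / (2 * τ) : ℝ) : EReal)
      ≤ P y + ((‖y - a‖ ^ 2 / (2 * τ) : ℝ) : EReal)) :
    IsSubgradAt P (τ⁻¹ • (a - x)) x := by
  obtain ⟨p, hp⟩ := EReal.exists_eq_coe (hbot x) hx
  intro u
  by_cases hu : P u = ⊤
  · simp [hu]
  obtain ⟨q, hq⟩ := EReal.exists_eq_coe (hbot u) hu
  rw [hp, hq, ← EReal.coe_add, EReal.coe_le_coe_iff, real_inner_smul_left, ← sub_nonneg]
  set A := ⟪x - a, u - x⟫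
  have hA : ⟪a - x, u - x⟫ = -A := by rw [← inner_neg_left, neg_sub]
  -- compare `x` with the points `x + s • (u - x)` of the segment towards `u`, and let `s → 0`
  suffices p - q - τ⁻¹ * A ≤ 0 by rw [hA]; linarith
  refine nonpos_of_forall_le_mul (B := ‖u - x‖ ^ 2 / (2 * τ)) fun s hs hs1 => ?_
  have hseg : P (x + s • (u - x)) ≤ (((1 - s) * p + s * q : ℝ) : EReal) := by
    convert hP.le_of_le_of_le hp.le hq.le (sub_nonneg.2 hs1) hs.le (by ring) using 2
    module
  have hm := (hmin (x + s • (u - x))).trans (add_le_add hseg le_rfl)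
  rw [hp] at hm
  norm_cast at hm
  have hexp : ‖x + s • (u - x) - a‖ ^ 2 = ‖x - a‖ ^ 2 + 2 * s * A + s ^ 2 * ‖u - x‖ ^ 2 := by
    rw [show x + s • (u - x) - a = (x - a) + s • (u - x) by module, norm_add_sq_real,
      real_inner_smul_right, norm_smul, Real.norm_eq_abs, mul_pow, sq_abs]
    ring
  rw [hexp] at hm
  refine le_of_mul_le_mul_left ?_ hs
  field_simp at hm ⊢
  nlinarith

theorem exists_isSubgradAt_prox [ProperSpace E] (hP : EConvex P) (hlsc : LowerSemicontinuous P)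
    (hbot : ∀ u, P u ≠ ⊥) (hne : ∃ u, P u ≠ ⊤) (a : E) {τ : ℝ} (hτ : 0 < τ) :
    ∃ x, P x ≠ ⊤ ∧ IsSubgradAt P (τ⁻¹ • (a - x)) x := by
  obtain ⟨x, hx⟩ := hP.exists_forall_add_sq_le hlsc hbot hne a hτ
  obtain ⟨u₀, hu₀⟩ := hne
  have hxtop : P x ≠ ⊤ := fun htop => by
    obtain ⟨r₀, hr₀⟩ := EReal.exists_eq_coe (hbot u₀) hu₀
    simpa [htop, hr₀, ← EReal.coe_add] using hx u₀
  exact ⟨x, hxtop, hP.isSubgradAt_of_forall_add_sq_le hbot hτ hxtop hx⟩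

end InnerProduct

end EConvex

section Conjugate
variable {E : Type*} [NormedAddCommGroup E] [InnerProductSpace ℝ E] {P : E → EReal}

theorem inner_sub_le_conj (v x : E) : ((⟪v, x⟫ : ℝ) : EReal) - P x ≤ conj P v :=
  le_iSup (fun u => ((⟪v, u⟫ : ℝ) : EReal) - P u) x

theorem IsSubgradAt.conj_eq {v x : E} {p : ℝ} (h : IsSubgradAt P v x) (hp : P x = p) :
    conj P v = ((⟪v, x⟫ - p : ℝ) : EReal) := by
  refine le_antisymm (iSup_le fun u => ?_) (by simpa [hp] using inner_sub_le_conj (P := P) v x)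
  have hu := h u
  rw [hp] at hu
  induction hPu : P u using EReal.rec with
  | bot => rw [hPu] at hu; exact absurd hu (by simp [← EReal.coe_add])
  | top => simp
  | coe q =>
    rw [hPu, ← EReal.coe_add, EReal.coe_le_coe_iff, inner_sub_right] at hu
    rw [← EReal.coe_sub, EReal.coe_le_coe_iff]
    linarith

/-- By the Fenchel–Young equality at `(x, v)`, the function `conj P + (τ / 2) ‖· - w‖²` exceeds its
value at `v` by at least `(τ / 2) ‖· - v‖²`. -/
theorem IsSubgradAt.eq_of_conj_add_sq_le {v x w y : E} {p τ : ℝ} (h : IsSubgradAt P v x)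
    (hp : P x = p) (hτ : 0 < τ) (hx : x = τ • (w - v))
    (hy : conj P y + ((τ / 2 * ‖y - w‖ ^ 2 : ℝ) : EReal)
      ≤ conj P v + ((τ / 2 * ‖v - w‖ ^ 2 : ℝ) : EReal)) : y = v := by
  have hle := (add_le_add (inner_sub_le_conj (P := P) y x) le_rfl).trans hy
  rw [h.conj_eq hp, hp, ← EReal.coe_sub, ← EReal.coe_add, ← EReal.coe_add,
    EReal.coe_le_coe_iff] at hle
  have hexp : ‖y - w‖ ^ 2 = ‖y - v‖ ^ 2 - 2 * ⟪y - v, w - v⟫ + ‖v - w‖ ^ 2 := by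
    rw [show y - w = (y - v) - (w - v) by abel, norm_sub_sq_real, norm_sub_rev w v]
  have hinner : ⟪y, x⟫ - ⟪v, x⟫ = τ * ⟪y - v, w - v⟫ := by
    rw [← inner_sub_left, hx, real_inner_smul_right]
  have hsq : τ / 2 * ‖y - v‖ ^ 2 ≤ 0 := by rw [hexp] at hle; nlinarith
  have hnorm : ‖y - v‖ ^ 2 = 0 :=
    le_antisymm (nonpos_of_mul_nonpos_right hsq (by positivity)) (sq_nonneg _)
  simpa [sub_eq_zero] using hnorm

end Conjugate

theorem stmt_15_general
    {Z Y : Type*}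
    [NormedAddCommGroup Z] [InnerProductSpace ℝ Z] [FiniteDimensional ℝ Z]
    [NormedAddCommGroup Y] [InnerProductSpace ℝ Y] [FiniteDimensional ℝ Y]
    (h' : Z → Z)
    (L : ℝ)
    (P : Y → EReal)
    (hP_ne_bot : ∀ u, P u ≠ ⊥) (hP_proper : ∃ u, P u ≠ ⊤)
    (hP_lsc : LowerSemicontinuous P)
    (hP_cvx : ∀ (u₁ u₂ : Y) (a b : ℝ), 0 ≤ a → 0 ≤ b → a + b = 1 →
      P (a • u₁ + b • u₂) ≤ (a : EReal) * P u₁ + (b : EReal) * P u₂)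
    (M : Z →L[ℝ] Y) (hM : M ≠ 0) (b : Y)
    (β τ : ℝ) (hβ : 0 < β)
    (hτ : β * ‖(ContinuousLinearMap.adjoint M).comp M‖ ≤ τ)
    (y : ℕ → Y) (z : ℕ → Z)
    -- the PPG iterations with `γ = 1`
    (hy : ∀ (t : ℕ) (u : Y),
      conj P (y (t+1)) + ((τ / 2 * ‖y (t+1) -
          τ⁻¹ • (τ • y t - β • M (ContinuousLinearMap.adjoint M (y t)) - b
            + M (z t) - β • M (h' (z t)))‖ ^ 2 : ℝ) : EReal)
        ≤ conj P u + ((τ / 2 * ‖u -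
          τ⁻¹ • (τ • y t - β • M (ContinuousLinearMap.adjoint M (y t)) - b
            + M (z t) - β • M (h' (z t)))‖ ^ 2 : ℝ) : EReal))
    (hz : ∀ t : ℕ, z (t+1) = z t - β • (h' (z t) + ContinuousLinearMap.adjoint M (y (t+1)))) :
    ∀ t : ℕ,
      IsSubgradAt P (y (t+1))
        (M (z (t+1)) - b - (τ • (y (t+1) - y t)
          - β • M (ContinuousLinearMap.adjoint M (y (t+1) - y t)))) := by
  intro t
  have hτ₀ : 0 < τ := (mul_pos hβ (norm_pos_iff.2 (by simpa using hM))).trans_le hτ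
  set W := τ • y t - β • M (ContinuousLinearMap.adjoint M (y t)) - b + M (z t) - β • M (h' (z t))
  obtain ⟨x, hxtop, hsub⟩ :=
    EConvex.exists_isSubgradAt_prox hP_cvx hP_lsc hP_ne_bot hP_proper W hτ₀
  obtain ⟨p, hp⟩ := EReal.exists_eq_coe (hP_ne_bot x) hxtop
  have hyx : y (t + 1) = τ⁻¹ • (W - x) := hsub.eq_of_conj_add_sq_le hp hτ₀
    (by rw [← smul_sub, sub_sub_cancel, smul_smul, mul_inv_cancel₀ hτ₀.ne', one_smul]) (hy t _)
  have hx : x = W - τ • y (t + 1) := by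
    rw [hyx, smul_smul, mul_inv_cancel₀ hτ₀.ne', one_smul, sub_sub_cancel]
  have htarget : M (z (t + 1)) - b - (τ • (y (t + 1) - y t)
      - β • M (ContinuousLinearMap.adjoint M (y (t + 1) - y t))) = x := by
    rw [hx, hz t]
    simp only [W, map_sub, map_add, map_smul]
    module
  rw [htarget, hyx]
  exact hsub

/-- **Subgradient property of the PPG iterates when `γ = 1` ((domP) in Remark 4.1).**
For the PPG algorithm with `γ = 1`, every iterate satisfies
`y^{t+1} ∈ ∂P(Mz^{t+1} − b − T(y^{t+1} − y^t))`, where `T = τI − βMM*`. -/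
theorem stmt_15
    {Z Y : Type*}
    [NormedAddCommGroup Z] [InnerProductSpace ℝ Z] [FiniteDimensional ℝ Z]
    [NormedAddCommGroup Y] [InnerProductSpace ℝ Y] [FiniteDimensional ℝ Y]
    (h : Z → ℝ) (h' : Z → Z)
    (hconv : ConvexOn ℝ Set.univ h)
    (hgrad : ∀ w : Z, HasGradientAt h (h' w) w)
    (L : ℝ) (hL : 0 < L)
    (hlip : ∀ u v : Z, ‖h' u - h' v‖ ≤ L * ‖u - v‖)
    (P : Y → EReal)
    (hP_ne_bot : ∀ u, P u ≠ ⊥) (hP_proper : ∃ u, P u ≠ ⊤)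
    (hP_lsc : LowerSemicontinuous P)
    (hP_cvx : ∀ (u₁ u₂ : Y) (a b : ℝ), 0 ≤ a → 0 ≤ b → a + b = 1 →
      P (a • u₁ + b • u₂) ≤ (a : EReal) * P u₁ + (b : EReal) * P u₂)
    (M : Z →L[ℝ] Y) (hM : M ≠ 0) (b : Y)
    (β τ : ℝ) (hβ : 0 < β)
    (hτ : β * ‖(ContinuousLinearMap.adjoint M).comp M‖ ≤ τ)
    (y : ℕ → Y) (z : ℕ → Z)
    -- the PPG iterations with `γ = 1`
    (hy : ∀ (t : ℕ) (u : Y),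
      conj P (y (t+1)) + ((τ / 2 * ‖y (t+1) -
          τ⁻¹ • (τ • y t - β • M (ContinuousLinearMap.adjoint M (y t)) - b
            + M (z t) - β • M (h' (z t)))‖ ^ 2 : ℝ) : EReal)
        ≤ conj P u + ((τ / 2 * ‖u -
          τ⁻¹ • (τ • y t - β • M (ContinuousLinearMap.adjoint M (y t)) - b
            + M (z t) - β • M (h' (z t)))‖ ^ 2 : ℝ) : EReal))
    (hz : ∀ t : ℕ, z (t+1) = z t - β • (h' (z t) + ContinuousLinearMap.adjoint M (y (t+1)))) :
    ∀ t : ℕ,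
      IsSubgradAt P (y (t+1))
        (M (z (t+1)) - b - (τ • (y (t+1) - y t)
          - β • M (ContinuousLinearMap.adjoint M (y (t+1) - y t)))) :=
  stmt_15_general h' L P hP_ne_bot hP_proper hP_lsc hP_cvx M hM b β τ hβ hτ y z hy hz
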